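/- Let U > 0, l ≥ 0, and let ū : ℝ → [−U/2, U/2] be measurable and non-increasing with ∫_ℝ z (ū(z) − u₀(z)) dz = U l²/2, where u₀(z) = −U/2 for z ≥ 0 and u₀(z) = U/2 for z < 0. Then (1/U) ∫_ℝ (1/2)(U²/4 − ū(z)²) dz ≤ U l / √12. -/

import Mathlib

open MeasureTheory

noncomputable section

/-- the reference (discontinuous) shear profile u₀ -/
def u0 (U z : ℝ) : ℝ := if 0 ≤ z then -U / 2 else U / 2

/-! For every `t > 0` and `v ∈ [-U/2, U/2]` one has the Fenchel–Young type bound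
`g(v) ≤ t z (v - u₀ z) + (U/2 - t|z|)₊² / 2`, with equality at the rarefaction profile
`v = -t z` (clipped to `[-U/2, U/2]`). Integrating in `z` gives
`∫ g(ū) ≤ t M + U³/(24 t)` where `M` is the moment, and optimizing over `t` gives
`∫ g(ū) ≤ √(U³ M / 6)`. -/

open Set

lemma mul_two_mul_sub_le_max_sq {a c : ℝ} (ha : 0 ≤ a) : a * (2 * c - a) ≤ max c 0 ^ 2 := by
  rcases le_total c 0 with hc | hc
  · rw [max_eq_right hc]; nlinarith
  · rw [max_eq_left hc]; nlinarith [sq_nonneg (c - a)]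

lemma flux_le_mul_moment_add_max_sq {U v : ℝ} (hv : v ∈ Icc (-(U / 2)) (U / 2)) (t z : ℝ) :
    1 / 2 * (U ^ 2 / 4 - v ^ 2) ≤ t * (z * (v - u0 U z)) + max (U / 2 - t * |z|) 0 ^ 2 / 2 := by
  rcases le_or_gt 0 z with hz | hz
  · have := mul_two_mul_sub_le_max_sq (c := U / 2 - t * z) (by linarith [hv.1] : 0 ≤ v + U / 2)
    rw [u0, if_pos hz, abs_of_nonneg hz]
    linarith
  · have := mul_two_mul_sub_le_max_sq (c := U / 2 + t * z) (by linarith [hv.2] : 0 ≤ U / 2 - v)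
    rw [u0, if_neg hz.not_ge, abs_of_neg hz, mul_neg, sub_neg_eq_add]
    linarith

lemma integrable_max_sub_mul_abs_sq (c t : ℝ) (ht : 0 < t) :
    Integrable fun z : ℝ => max (c - t * |z|) 0 ^ 2 := by
  refine Continuous.integrable_of_hasCompactSupport (by fun_prop) ?_
  refine HasCompactSupport.intro (isCompact_Icc (a := -(c / t)) (b := c / t)) fun z hz => ?_
  have : c < t * |z| := by
    rw [← div_lt_iff₀' ht]
    rcases not_and_or.1 hz with h | h <;> push Not at h
    · linarith [neg_abs_le z]
    · linarith [le_abs_self z]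
  simp [max_eq_right (by linarith : c - t * |z| ≤ 0)]

lemma integral_max_sub_mul_abs_sq {c t : ℝ} (hc : 0 ≤ c) (ht : 0 < t) :
    ∫ z : ℝ, max (c - t * |z|) 0 ^ 2 = 2 * c ^ 3 / (3 * t) := by
  have hhalf : ∫ y in Ioi (0:ℝ), max (c - y) 0 ^ 2 = c ^ 3 / 3 := by
    rw [setIntegral_eq_of_subset_of_forall_sdiff_eq_zero measurableSet_Ioi Ioc_subset_Ioi_self
      fun y hy => ?_]
    · rw [setIntegral_congr_fun measurableSet_Ioc fun y hy => by
          rw [max_eq_left (sub_nonneg.2 hy.2)],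
        ← intervalIntegral.integral_of_le hc,
        intervalIntegral.integral_comp_sub_left (fun y => y ^ 2), integral_pow]
      norm_num
    · have : c < y := not_le.1 fun h => hy.2 ⟨hy.1, h⟩
      simp [max_eq_right (by linarith : c - y ≤ 0)]
  rw [integral_comp_abs (f := fun x => max (c - t * x) 0 ^ 2),
    integral_comp_mul_left_Ioi (fun x => max (c - x) 0 ^ 2) 0 ht, mul_zero, hhalf]
  simp only [smul_eq_mul]
  field_simp

lemma le_sqrt_four_mul_of_forall_le_mul_add_div {F M K : ℝ} (hK : 0 < K)
    (h : ∀ t > 0, F ≤ t * M + K / t) : F ≤ √(4 * M * K) := by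
  rcases le_or_gt F 0 with hF | hF
  · exact hF.trans (Real.sqrt_nonneg _)
  rw [Real.le_sqrt' hF]
  have key := h (2 * K / F) (by positivity)
  rw [show K / (2 * K / F) = F / 2 by field_simp] at key
  have hKF : F * (2 * K / F) = 2 * K := mul_div_cancel₀ _ hF.ne'
  nlinarith [mul_le_mul_of_nonneg_left key hF.le]

lemma integral_flux_le_mul_moment_add {U t : ℝ} {v : ℝ → ℝ}
    (hv : ∀ z, v z ∈ Icc (-(U / 2)) (U / 2))
    (hmom : Integrable fun z => z * (v z - u0 U z)) (ht : 0 < t) :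
    ∫ z, 1 / 2 * (U ^ 2 / 4 - v z ^ 2) ≤ t * (∫ z, z * (v z - u0 U z)) + U ^ 3 / 24 / t := by
  have hU : 0 ≤ U / 2 := by linarith [(hv 0).1, (hv 0).2]
  have htent := integrable_max_sub_mul_abs_sq (U / 2) t ht
  calc ∫ z, 1 / 2 * (U ^ 2 / 4 - v z ^ 2)
      ≤ ∫ z, t * (z * (v z - u0 U z)) + max (U / 2 - t * |z|) 0 ^ 2 / 2 :=
        integral_mono_of_nonneg
          (ae_of_all _ fun z => show (0 : ℝ) ≤ _ by nlinarith [(hv z).1, (hv z).2])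
          ((hmom.const_mul t).add (htent.div_const 2))
          (ae_of_all _ fun z => flux_le_mul_moment_add_max_sq (hv z) t z)
    _ = t * (∫ z, z * (v z - u0 U z)) + U ^ 3 / 24 / t := by
        rw [integral_add (hmom.const_mul t) (htent.div_const 2), integral_const_mul,
          integral_div, integral_max_sub_mul_abs_sq hU ht]
        ring

theorem interpolation_for_burgers_flux_general
    (U l : ℝ) (hU : 0 < U) (hl : 0 ≤ l)
    (ubar : ℝ → ℝ)
    (h_range : ∀ z : ℝ, ubar z ∈ Set.Icc (-(U/2)) (U/2))
    (h_mom_int : MeasureTheory.Integrable (fun z => z * (ubar z - u0 U z)))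
    (h_mom : (∫ z : ℝ, z * (ubar z - u0 U z)) = U * l ^ 2 / 2) :
    (1 / U) * ∫ z : ℝ, (1 / 2) * (U ^ 2 / 4 - (ubar z) ^ 2) ≤ U * l / Real.sqrt 12 := by
  have hF := le_sqrt_four_mul_of_forall_le_mul_add_div (by positivity : 0 < U ^ 3 / 24)
    fun t ht => h_mom ▸ integral_flux_le_mul_moment_add h_range h_mom_int ht
  have hsqrt : √(4 * (U * l ^ 2 / 2) * (U ^ 3 / 24)) = U * (U * l / √12) := by
    rw [show 4 * (U * l ^ 2 / 2) * (U ^ 3 / 24) = (U ^ 2 * l) ^ 2 / 12 by ring,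
      Real.sqrt_div' _ (by norm_num), Real.sqrt_sq (by positivity)]
    ring
  rw [one_div, inv_mul_le_iff₀ hU]
  exact hF.trans hsqrt.le

theorem interpolation_for_burgers_flux
    (U l : ℝ) (hU : 0 < U) (hl : 0 ≤ l)
    (ubar : ℝ → ℝ) (h_meas : Measurable ubar) (h_anti : Antitone ubar)
    (h_range : ∀ z : ℝ, ubar z ∈ Set.Icc (-(U/2)) (U/2))
    (h_mom_int : MeasureTheory.Integrable (fun z => z * (ubar z - u0 U z)))
    (h_mom : (∫ z : ℝ, z * (ubar z - u0 U z)) = U * l ^ 2 / 2) :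
    (1 / U) * ∫ z : ℝ, (1 / 2) * (U ^ 2 / 4 - (ubar z) ^ 2) ≤ U * l / Real.sqrt 12 :=
  interpolation_for_burgers_flux_general U l hU hl ubar h_range h_mom_int h_mom

end
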